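/- Let f and g be generalized polynomials with nonnegative real coefficients and nonnegative rational exponents (with some common denominators). If Ψ(f(t)^n) = Ψ(g(t)^n) as polynomials for every positive integer n, then f = g. -/

import Mathlib

open Finsupp

/-- Evaluation of a generalized polynomial `∑ c_j t^j` (a finitely supported
function `ℚ →₀ ℝ`, with convolution product) at a positive real `x`, using
real exponentiation. -/
noncomputable def gpEval (f : AddMonoidAlgebra ℝ ℚ) (x : ℝ) : ℝ :=
  f.coeff.sum fun j c => c * x ^ (j : ℝ)

/-- The linear rounding operator `Ψ` with `Ψ(t^j) = t^⌈j⌉`. -/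
noncomputable def gpPsi (f : AddMonoidAlgebra ℝ ℚ) : AddMonoidAlgebra ℝ ℚ :=
  AddMonoidAlgebra.ofCoeff (Finsupp.mapDomain (fun j => (⌈j⌉ : ℚ)) f.coeff)

/-!
For `x ≥ 1` and nonnegative coefficients, `Ψ` raises every exponent by less than one, so
`F(x) ≤ Ψ(F)(x) ≤ x · F(x)`. Applied to `F = f ^ n` and `F = g ^ n`, the hypothesis gives
`f(x) ^ n ≤ x · g(x) ^ n` for all `n`, hence `f(x) ≤ g(x)`, and symmetrically. So `f - g` vanishes
on `[1, ∞)`; dividing by `x ^ m`, where `m` is its largest exponent, and letting `x → ∞` shows that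
its leading coefficient vanishes, so `f = g`.
-/

open Filter Topology

section NonnegCoeff

variable {R M : Type*} [Semiring R] [PartialOrder R] [IsOrderedRing R] [AddMonoid M]

lemma AddMonoidAlgebra.coeff_mul_nonneg {f g : AddMonoidAlgebra R M} (hf : ∀ j, 0 ≤ f.coeff j)
    (hg : ∀ j, 0 ≤ g.coeff j) (j : M) : 0 ≤ (f * g).coeff j := by
  classical
  rw [AddMonoidAlgebra.coeff_mul]
  refine Finset.sum_nonneg fun a _ => Finset.sum_nonneg fun b _ => ?_
  dsimp only
  split_ifs
  exacts [mul_nonneg (hf a) (hg b), le_rfl]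

lemma AddMonoidAlgebra.coeff_pow_nonneg {f : AddMonoidAlgebra R M} (hf : ∀ j, 0 ≤ f.coeff j)
    (n : ℕ) (j : M) : 0 ≤ (f ^ n).coeff j := by
  induction n generalizing j with
  | zero =>
    classical
    rw [pow_zero, AddMonoidAlgebra.one_def, AddMonoidAlgebra.coeff_single, Finsupp.single_apply]
    split_ifs <;> simp
  | succ n ih => exact pow_succ f n ▸ coeff_mul_nonneg ih hf j

end NonnegCoeff

noncomputable def ratRpowHom (x : ℝ) (hx : 0 < x) : Multiplicative ℚ →* ℝ where
  toFun j := x ^ ((j.toAdd : ℚ) : ℝ)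
  map_one' := by simp
  map_mul' a b := by
    simp only [toAdd_mul, Rat.cast_add]
    exact Real.rpow_add hx _ _

lemma gpEval_eq_lift (f : AddMonoidAlgebra ℝ ℚ) {x : ℝ} (hx : 0 < x) :
    gpEval f x = AddMonoidAlgebra.lift ℝ ℝ ℚ (ratRpowHom x hx) f := by
  simp [AddMonoidAlgebra.lift_apply, gpEval, ratRpowHom, smul_eq_mul]

lemma gpEval_pow (f : AddMonoidAlgebra ℝ ℚ) {x : ℝ} (hx : 0 < x) (n : ℕ) :
    gpEval (f ^ n) x = gpEval f x ^ n := by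
  simp only [gpEval_eq_lift _ hx, map_pow]

lemma gpEval_sub (f g : AddMonoidAlgebra ℝ ℚ) {x : ℝ} (hx : 0 < x) :
    gpEval (f - g) x = gpEval f x - gpEval g x := by
  simp only [gpEval_eq_lift _ hx, map_sub]

lemma gpEval_nonneg {f : AddMonoidAlgebra ℝ ℚ} (hf : ∀ j, 0 ≤ f.coeff j) {x : ℝ} (hx : 0 < x) :
    0 ≤ gpEval f x :=
  Finset.sum_nonneg fun j _ => mul_nonneg (hf j) (Real.rpow_pos_of_pos hx _).le

lemma gpEval_gpPsi (f : AddMonoidAlgebra ℝ ℚ) (x : ℝ) :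
    gpEval (gpPsi f) x = f.coeff.sum fun j c => c * x ^ ((⌈j⌉ : ℚ) : ℝ) :=
  Finsupp.sum_mapDomain_index (fun _ => zero_mul _) (fun _ _ _ => add_mul _ _ _)

lemma gpEval_le_gpEval_gpPsi {f : AddMonoidAlgebra ℝ ℚ} (hf : ∀ j, 0 ≤ f.coeff j) {x : ℝ}
    (hx : 1 ≤ x) : gpEval f x ≤ gpEval (gpPsi f) x := by
  rw [gpEval_gpPsi]
  refine Finset.sum_le_sum fun j _ => mul_le_mul_of_nonneg_left ?_ (hf j)
  exact Real.rpow_le_rpow_of_exponent_le hx (mod_cast Int.le_ceil j)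

lemma gpEval_gpPsi_le {f : AddMonoidAlgebra ℝ ℚ} (hf : ∀ j, 0 ≤ f.coeff j) {x : ℝ}
    (hx : 1 ≤ x) : gpEval (gpPsi f) x ≤ x * gpEval f x := by
  rw [gpEval_gpPsi, gpEval, Finsupp.sum, Finsupp.sum, Finset.mul_sum]
  refine Finset.sum_le_sum fun j _ => ?_
  calc f.coeff j * x ^ ((⌈j⌉ : ℚ) : ℝ) ≤ f.coeff j * x ^ ((j : ℝ) + 1) := by
        refine mul_le_mul_of_nonneg_left (Real.rpow_le_rpow_of_exponent_le hx ?_) (hf j)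
        exact_mod_cast (Int.ceil_lt_add_one j).le
    _ = x * (f.coeff j * x ^ (j : ℝ)) := by
        rw [Real.rpow_add (by linarith), Real.rpow_one]; ring

lemma le_of_forall_pow_le_mul_pow {a b c : ℝ} (hb : 0 ≤ b)
    (h : ∀ n : ℕ, 0 < n → a ^ n ≤ c * b ^ n) : a ≤ b := by
  by_contra! hba
  have hb0 : 0 < b := hb.lt_of_ne <| by
    rintro rfl
    have := h 1 one_pos
    simp only [pow_one, mul_zero] at this
    linarith
  have hgrow := tendsto_pow_atTop_atTop_of_one_lt ((one_lt_div hb0).mpr hba)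
  obtain ⟨n, hcn, hn⟩ := (hgrow.eventually_gt_atTop c |>.and (eventually_gt_atTop 0)).exists
  rw [div_pow, lt_div_iff₀ (pow_pos hb0 n)] at hcn
  exact (h n hn).not_gt hcn

lemma gpEval_le_of_gpPsi_pow_eq {f g : AddMonoidAlgebra ℝ ℚ} (hf : ∀ j, 0 ≤ f.coeff j)
    (hg : ∀ j, 0 ≤ g.coeff j) (h : ∀ n : ℕ, 0 < n → gpPsi (f ^ n) = gpPsi (g ^ n)) {x : ℝ}
    (hx : 1 ≤ x) : gpEval f x ≤ gpEval g x := by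
  have hx0 : 0 < x := by linarith
  refine le_of_forall_pow_le_mul_pow (c := x) (gpEval_nonneg hg hx0) fun n hn => ?_
  calc gpEval f x ^ n = gpEval (f ^ n) x := (gpEval_pow f hx0 n).symm
    _ ≤ gpEval (gpPsi (f ^ n)) x := gpEval_le_gpEval_gpPsi (f.coeff_pow_nonneg hf n) hx
    _ = gpEval (gpPsi (g ^ n)) x := by rw [h n hn]
    _ ≤ x * gpEval (g ^ n) x := gpEval_gpPsi_le (g.coeff_pow_nonneg hg n) hx
    _ = x * gpEval g x ^ n := by rw [gpEval_pow g hx0 n]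

lemma tendsto_gpEval_div_rpow_max (f : AddMonoidAlgebra ℝ ℚ) (hf : f.coeff.support.Nonempty) :
    Tendsto (fun x => gpEval f x / x ^ ((f.coeff.support.max' hf : ℚ) : ℝ)) atTop
      (𝓝 (f.coeff (f.coeff.support.max' hf))) := by
  set m := f.coeff.support.max' hf
  have hsum : ∀ᶠ x in atTop, gpEval f x / x ^ (m : ℝ) =
      ∑ j ∈ f.coeff.support, f.coeff j * x ^ ((j : ℝ) - m) := by
    filter_upwards [eventually_gt_atTop 0] with x hx
    rw [gpEval, Finsupp.sum, Finset.sum_div]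
    refine Finset.sum_congr rfl fun j _ => ?_
    rw [Real.rpow_sub hx, mul_div_assoc]
  have hlim : f.coeff m = ∑ j ∈ f.coeff.support, if j = m then f.coeff j else 0 := by
    simp [m, Finset.max'_mem]
  rw [tendsto_congr' hsum, hlim]
  refine tendsto_finsetSum _ fun j hj => ?_
  split_ifs with hjm
  · subst hjm
    simp
  · have hlt : (j : ℝ) < m := mod_cast lt_of_le_of_ne (f.coeff.support.le_max' j hj) hjm
    simpa using (tendsto_rpow_neg_atTop (sub_pos.mpr hlt)).const_mul (f.coeff j)

lemma eq_zero_of_eventually_gpEval_eq_zero {f : AddMonoidAlgebra ℝ ℚ}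
    (hf : ∀ᶠ x in atTop, gpEval f x = 0) : f = 0 := by
  by_contra hne
  have hs : f.coeff.support.Nonempty := Finsupp.support_nonempty_iff.mpr (by simpa using hne)
  have hzero : Tendsto (fun x => gpEval f x / x ^ ((f.coeff.support.max' hs : ℚ) : ℝ)) atTop
      (𝓝 0) :=
    tendsto_const_nhds.congr' (hf.mono fun x hx => by simp [hx])
  exact Finsupp.mem_support_iff.mp (f.coeff.support.max'_mem hs)
    (tendsto_nhds_unique (tendsto_gpEval_div_rpow_max f hs) hzero)

theorem stmt_5_general (f g : AddMonoidAlgebra ℝ ℚ)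
    (hfpos : ∀ j, 0 ≤ f.coeff j) (hgpos : ∀ j, 0 ≤ g.coeff j)
    (h : ∀ n : ℕ, 0 < n → gpPsi (f ^ n) = gpPsi (g ^ n)) :
    f = g := by
  rw [← sub_eq_zero]
  refine eq_zero_of_eventually_gpEval_eq_zero ?_
  filter_upwards [eventually_ge_atTop 1] with x hx
  rw [gpEval_sub f g (by linarith), sub_eq_zero]
  exact le_antisymm (gpEval_le_of_gpPsi_pow_eq hfpos hgpos h hx)
    (gpEval_le_of_gpPsi_pow_eq hgpos hfpos (fun n hn => (h n hn).symm) hx)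

theorem stmt_5 (f g : AddMonoidAlgebra ℝ ℚ)
    (hf : ∃ r : ℕ, 0 < r ∧ ∀ j ∈ f.coeff.support, ∃ i : ℕ, j = (i : ℚ) / r)
    (hg : ∃ r : ℕ, 0 < r ∧ ∀ j ∈ g.coeff.support, ∃ i : ℕ, j = (i : ℚ) / r)
    (hfpos : ∀ j, 0 ≤ f.coeff j) (hgpos : ∀ j, 0 ≤ g.coeff j)
    (h : ∀ n : ℕ, 0 < n → gpPsi (f ^ n) = gpPsi (g ^ n)) :
    f = g :=
  stmt_5_general f g hfpos hgpos h
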